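/- (Joint Lyapunov / small-gain theorem; Theorem 3 of the paper, stated along trajectories.) Let a1, a2, a3, a4, c1, c2, c3, c4 > 0 with c3 < c2, a4·c4/(a3·c1) < 1, and a4·c4/(a3·c3) < c1/(c1+c2), and let σ, σ_ε be of class 𝒦. Then there exist c_ζ > 0, λ_ζ ∈ (0,1), and σ_ζ of class 𝒦, depending only on these data, such that for every collection of sequences ζ : ℕ → ℝ^{p}, ε : ℕ → ℝ^{q}, ω : ℕ → ℝ^{m}, V : ℕ → [0,∞), V_ε : ℕ → [0,∞) satisfying for all k ∈ ℕ: a1‖ζ(k)‖² ≤ V(k) ≤ a2‖ζ(k)‖², V(k+1) ≤ V(k) − a3‖ζ(k)‖² + a4(‖ε(k)‖² + ‖ε(k+1)‖²) + σ(‖ω(k)‖), c1‖ε(k)‖² ≤ V_ε(k) ≤ c2‖ε(k)‖², and V_ε(k+1) ≤ V_ε(k) − c3‖ε(k)‖² + c4‖ζ(k)‖² + σ_ε(‖ω(k)‖), one has √(‖ζ(k)‖² + ‖ε(k)‖²) ≤ c_ζ λ_ζ^k √(‖ζ(0)‖² + ‖ε(0)‖²) + Σ_{i=0}^{k} λ_ζ^i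 σ_ζ(‖ω(k−i)‖) for all k ∈ ℕ. -/

import Mathlib

open scoped BigOperators

noncomputable section

abbrev Vec (n : ℕ) : Type := EuclideanSpace ℝ (Fin n)

/-- Class 𝒦 functions `[0,∞) → [0,∞)`. -/
def IsClassK (φ : ℝ → ℝ) : Prop :=
  ContinuousOn φ (Set.Ici 0) ∧ StrictMonoOn φ (Set.Ici 0) ∧ φ 0 = 0 ∧ ∀ t, 0 ≤ t → 0 ≤ φ t

/-!
The weighted sum `W = c1 * V + μ * Vε` is a Lyapunov function for the joint state `(ζ, ε)`.
The small-gain condition leaves room for a weight `μ > 0` with `a4 (c1 + c2 - c3) < μ c3` and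
`μ c4 < a3 c1 - a4 c4`; bounding `‖ε (k + 1)‖²` through `Vε (k + 1)`, the cross terms are then
absorbed and `W (k + 1) ≤ ρ W k + S k` with `ρ < 1` and `S` a class-𝒦 function of `‖ω k‖`.
Taking square roots gives a linear recursion `√W (k + 1) ≤ √ρ √W k + √S k` whose explicit
solution is the estimate.
-/

open Finset

theorem Real.sqrt_add_le (x y : ℝ) : √(x + y) ≤ √x + √y := by
  rw [Real.sqrt_le_left (by positivity)]
  nlinarith [Real.sq_sqrt' (x := x), Real.sq_sqrt' (x := y), le_max_left x 0, le_max_left y 0,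
    mul_nonneg (Real.sqrt_nonneg x) (Real.sqrt_nonneg y)]

theorem le_pow_mul_add_sum_of_le_mul_add {x s : ℕ → ℝ} {r : ℝ} (hr : 0 ≤ r)
    (hs : ∀ k, 0 ≤ s k) (h : ∀ k, x (k + 1) ≤ r * (x k + s k)) (n : ℕ) :
    x n ≤ r ^ n * x 0 + ∑ i ∈ range (n + 1), r ^ i * s (n - i) := by
  have hgr := discrete_gronwall_prod_general (u := x) (c := fun _ => r) (b := fun k => r * s k)
    (n₀ := 0) (fun k _ => (h k).trans_eq (mul_add _ _ _)) (fun _ _ => hr) n.zero_le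
  simp only [prod_const, Nat.card_Ico, ← range_eq_Ico, card_range] at hgr
  calc x n ≤ r ^ n * x 0 + ∑ k ∈ range n, r ^ (n - k) * s k := by
        refine hgr.trans_eq ?_
        rw [mul_comm]
        refine congrArg _ (sum_congr rfl fun k hk => ?_)
        rw [mul_comm r, mul_assoc, ← pow_succ', show n - (k + 1) + 1 = n - k by grind, mul_comm]
    _ ≤ r ^ n * x 0 + ∑ k ∈ range (n + 1), r ^ (n - k) * s k := by
        rw [sum_range_succ, ← add_assoc]
        exact le_add_of_nonneg_right (mul_nonneg (pow_nonneg hr _) (hs n))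
    _ = r ^ n * x 0 + ∑ i ∈ range (n + 1), r ^ i * s (n - i) := by
        rw [← sum_range_reflect]
        refine congrArg _ (sum_congr rfl fun i hi => ?_)
        rw [show n - (n + 1 - 1 - i) = i by grind, show n + 1 - 1 - i = n - i by omega]

namespace IsClassK

variable {f g : ℝ → ℝ}

theorem nonneg (hf : IsClassK f) {t : ℝ} (ht : 0 ≤ t) : 0 ≤ f t :=
  hf.2.2.2 t ht

theorem add (hf : IsClassK f) (hg : IsClassK g) : IsClassK fun t => f t + g t :=
  ⟨hf.1.add hg.1, fun _ hx _ hy hxy => add_lt_add (hf.2.1 hx hy hxy) (hg.2.1 hx hy hxy),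
    by simp [hf.2.2.1, hg.2.2.1], fun _ ht => add_nonneg (hf.nonneg ht) (hg.nonneg ht)⟩

theorem const_mul (hf : IsClassK f) {c : ℝ} (hc : 0 < c) : IsClassK fun t => c * f t :=
  ⟨continuousOn_const.mul hf.1, fun _ hx _ hy hxy => mul_lt_mul_of_pos_left (hf.2.1 hx hy hxy) hc,
    by simp [hf.2.2.1], fun _ ht => mul_nonneg hc.le (hf.nonneg ht)⟩

theorem div_const (hf : IsClassK f) {c : ℝ} (hc : 0 < c) : IsClassK fun t => f t / c := by
  simpa only [div_eq_inv_mul] using hf.const_mul (inv_pos.2 hc)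

theorem sqrt (hf : IsClassK f) : IsClassK fun t => √(f t) :=
  ⟨Real.continuous_sqrt.comp_continuousOn hf.1,
    fun _ hx _ hy hxy => Real.sqrt_lt_sqrt (hf.nonneg hx) (hf.2.1 hx hy hxy),
    by simp [hf.2.2.1], fun _ _ => Real.sqrt_nonneg _⟩

end IsClassK

theorem min_mul_add_le_of_le {p q a b x y u v : ℝ} (hp : 0 ≤ p) (hq : 0 ≤ q) (hx : 0 ≤ x)
    (hy : 0 ≤ y) (hu : a * x ≤ u) (hv : b * y ≤ v) :
    min (p * a) (q * b) * (x + y) ≤ p * u + q * v := by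
  nlinarith [mul_le_mul_of_nonneg_right (min_le_left (p * a) (q * b)) hx,
    mul_le_mul_of_nonneg_right (min_le_right (p * a) (q * b)) hy,
    mul_le_mul_of_nonneg_left hu hp, mul_le_mul_of_nonneg_left hv hq]

theorem add_le_max_mul_of_le {p q a b x y u v : ℝ} (hp : 0 ≤ p) (hq : 0 ≤ q) (hx : 0 ≤ x)
    (hy : 0 ≤ y) (hu : u ≤ a * x) (hv : v ≤ b * y) :
    p * u + q * v ≤ max (p * a) (q * b) * (x + y) := by
  nlinarith [mul_le_mul_of_nonneg_right (le_max_left (p * a) (q * b)) hx,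
    mul_le_mul_of_nonneg_right (le_max_right (p * a) (q * b)) hy,
    mul_le_mul_of_nonneg_left hu hp, mul_le_mul_of_nonneg_left hv hq]

theorem mul_one_sub_div_add_le {a d : ℝ} (ha : 0 ≤ a) (hd : 0 < d) :
    a * (1 - a / (a + d)) ≤ d := by
  have had : 0 < a + d := add_pos_of_nonneg_of_pos ha hd
  rw [one_sub_div had.ne', add_sub_cancel_left, mul_div_assoc', div_le_iff₀ had]
  nlinarith

theorem exists_small_gain_weight {a3 a4 c1 c2 c3 c4 : ℝ} (ha3 : 0 < a3) (ha4 : 0 ≤ a4)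
    (hc1 : 0 < c1) (hc2 : 0 < c2) (hc3 : 0 < c3) (hc4 : 0 < c4) (hc32 : c3 ≤ c2)
    (hsg : a4 * c4 / (a3 * c3) < c1 / (c1 + c2)) :
    ∃ μ > 0, a4 * (c1 + c2 - c3) < μ * c3 ∧ μ * c4 < a3 * c1 - a4 * c4 := by
  have hsg' := (div_lt_div_iff₀ (by positivity) (by positivity)).1 hsg
  have hlt : a4 * (c1 + c2 - c3) / c3 < (a3 * c1 - a4 * c4) / c4 := by
    rw [div_lt_div_iff₀ hc3 hc4]
    linarith
  obtain ⟨μ, hlow, hupp⟩ := exists_between hlt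
  refine ⟨μ, ?_, (div_lt_iff₀ hc3).1 hlow, (lt_div_iff₀ hc4).1 hupp⟩
  exact (div_nonneg (mul_nonneg ha4 (by linarith)) hc3.le).trans_lt hlow

theorem weighted_lyapunov_decrease {a3 a4 c1 c2 c3 c4 μ δ z e e' V V' U U' s sε : ℝ} (hc1 : 0 ≤ c1)
    (ha4 : 0 ≤ a4) (hμ : 0 ≤ μ) (hz : 0 ≤ z) (he : 0 ≤ e)
    (hδz : δ ≤ a3 * c1 - a4 * c4 - μ * c4) (hδe : δ ≤ μ * c3 - a4 * (c1 + c2 - c3))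
    (hV : V' ≤ V - a3 * z + a4 * (e + e') + s) (hUlow' : c1 * e' ≤ U') (hUupp : U ≤ c2 * e)
    (hU : U' ≤ U - c3 * e + c4 * z + sε) :
    c1 * V' + μ * U' ≤ c1 * V + μ * U - δ * (z + e) + (c1 * s + (a4 + μ) * sε) := by
  have he' : c1 * e' ≤ (c2 - c3) * e + c4 * z + sε := by linarith
  nlinarith [mul_le_mul_of_nonneg_left hV hc1, mul_le_mul_of_nonneg_left hU hμ,
    mul_le_mul_of_nonneg_left he' ha4, mul_le_mul_of_nonneg_right hδz hz,
    mul_le_mul_of_nonneg_right hδe he]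

/-- The input at time `k - 1 - i` enters with weight `√ρ ^ i`; it is written as
`√ρ ^ (i + 1) * (· / √ρ)` and padded with the term `i = 0`, so that the sum runs over `i ≤ k`. -/
theorem sqrt_le_of_lyapunov {N W S : ℕ → ℝ} {α₁ α₂ δ ρ : ℝ} (hα₁ : 0 < α₁) (hρ : 0 < ρ)
    (hρ1 : ρ ≤ 1) (hρδ : α₂ * (1 - ρ) ≤ δ) (hN : ∀ k, 0 ≤ N k)
    (hlow : ∀ k, α₁ * N k ≤ W k) (hupp : ∀ k, W k ≤ α₂ * N k)
    (hdec : ∀ k, W (k + 1) ≤ W k - δ * N k + S k) (k : ℕ) :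
    √(N k) ≤ √(α₂ / α₁) * √ρ ^ k * √(N 0) +
      ∑ i ∈ range (k + 1), √ρ ^ i * (√(S (k - i) / α₁) / √ρ) := by
  have hcontract : ∀ k, W (k + 1) ≤ ρ * W k + S k := fun k => by
    nlinarith [hdec k, mul_le_mul_of_nonneg_right hρδ (hN k),
      mul_le_mul_of_nonneg_left (hupp k) (sub_nonneg.2 hρ1)]
  have hstep : ∀ k, √(W (k + 1) / α₁) ≤ √ρ * (√(W k / α₁) + √(S k / α₁) / √ρ) := fun k =>
    calc √(W (k + 1) / α₁) ≤ √(ρ * (W k / α₁) + S k / α₁) := by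
          gcongr
          rw [mul_div_assoc', ← add_div]
          gcongr
          exact hcontract k
      _ ≤ √ρ * √(W k / α₁) + √(S k / α₁) := by
          rw [← Real.sqrt_mul hρ.le]
          exact Real.sqrt_add_le _ _
      _ = √ρ * (√(W k / α₁) + √(S k / α₁) / √ρ) := by
          rw [mul_add, mul_div_cancel₀ _ (Real.sqrt_pos.2 hρ).ne']
  have hinit : √(W 0 / α₁) ≤ √(α₂ / α₁) * √(N 0) := by
    rw [← Real.sqrt_mul' _ (hN 0), div_mul_eq_mul_div]
    gcongr
    exact hupp 0
  calc √(N k) ≤ √(W k / α₁) := Real.sqrt_le_sqrt ((le_div_iff₀' hα₁).2 (hlow k))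
    _ ≤ √ρ ^ k * √(W 0 / α₁) + ∑ i ∈ range (k + 1), √ρ ^ i * (√(S (k - i) / α₁) / √ρ) :=
        le_pow_mul_add_sum_of_le_mul_add (x := fun k => √(W k / α₁))
          (Real.sqrt_nonneg ρ) (fun _ => by positivity) hstep k
    _ ≤ √(α₂ / α₁) * √ρ ^ k * √(N 0) +
          ∑ i ∈ range (k + 1), √ρ ^ i * (√(S (k - i) / α₁) / √ρ) := by
        rw [mul_right_comm, mul_comm (√ρ ^ k)]
        gcongr

theorem joint_lyapunov_small_gain_general
    {p q m : ℕ} (a1 a2 a3 a4 c1 c2 c3 c4 : ℝ)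
    (ha1 : 0 < a1) (ha2 : 0 < a2) (ha3 : 0 < a3) (ha4 : 0 < a4)
    (hc1 : 0 < c1) (hc2 : 0 < c2) (hc3 : 0 < c3) (hc4 : 0 < c4)
    (hc32 : c3 < c2)
    (hsg2 : a4 * c4 / (a3 * c3) < c1 / (c1 + c2))
    (σ σε : ℝ → ℝ) (hσ : IsClassK σ) (hσε : IsClassK σε) :
    ∃ (cζ lamζ : ℝ) (σζ : ℝ → ℝ), 0 < cζ ∧ lamζ ∈ Set.Ioo (0 : ℝ) 1 ∧ IsClassK σζ ∧
      ∀ (ζ : ℕ → Vec p) (ε : ℕ → Vec q) (ω : ℕ → Vec m) (V Vε : ℕ → ℝ),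
        (∀ k, 0 ≤ V k) → (∀ k, 0 ≤ Vε k) →
        (∀ k, a1 * ‖ζ k‖ ^ 2 ≤ V k) → (∀ k, V k ≤ a2 * ‖ζ k‖ ^ 2) →
        (∀ k, V (k + 1) ≤ V k - a3 * ‖ζ k‖ ^ 2 +
          a4 * (‖ε k‖ ^ 2 + ‖ε (k + 1)‖ ^ 2) + σ ‖ω k‖) →
        (∀ k, c1 * ‖ε k‖ ^ 2 ≤ Vε k) → (∀ k, Vε k ≤ c2 * ‖ε k‖ ^ 2) →
        (∀ k, Vε (k + 1) ≤ Vε k - c3 * ‖ε k‖ ^ 2 + c4 * ‖ζ k‖ ^ 2 + σε ‖ω k‖) →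
        ∀ k : ℕ, Real.sqrt (‖ζ k‖ ^ 2 + ‖ε k‖ ^ 2) ≤
          cζ * lamζ ^ k * Real.sqrt (‖ζ 0‖ ^ 2 + ‖ε 0‖ ^ 2) +
          ∑ i ∈ Finset.range (k + 1), lamζ ^ i * σζ ‖ω (k - i)‖ := by
  obtain ⟨μ, hμ, hμε, hμζ⟩ :=
    exists_small_gain_weight ha3 ha4.le hc1 hc2 hc3 hc4 hc32.le hsg2
  set δ := min (a3 * c1 - a4 * c4 - μ * c4) (μ * c3 - a4 * (c1 + c2 - c3))
  set α₁ := min (c1 * a1) (μ * c1)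
  set α₂ := max (c1 * a2) (μ * c2)
  set ρ := α₂ / (α₂ + δ)
  have hδ : 0 < δ := lt_min (by linarith) (by linarith)
  have hα₁ : 0 < α₁ := lt_min (by positivity) (by positivity)
  have hα₂ : 0 < α₂ := lt_max_of_lt_left (by positivity)
  have hρ : 0 < ρ := by positivity
  have hρ1 : ρ < 1 := (div_lt_one (by positivity)).2 (by linarith)
  refine ⟨√(α₂ / α₁), √ρ, fun t => √((c1 * σ t + (a4 + μ) * σε t) / α₁) / √ρ, by positivity,
    ⟨by positivity, (Real.sqrt_lt' one_pos).2 (by rwa [one_pow])⟩, ?_, ?_⟩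
  · exact (((hσ.const_mul hc1).add (hσε.const_mul (by positivity))).div_const hα₁).sqrt.div_const
      (by positivity)
  intro ζ ε ω V Vε _ _ hVlow hVupp hVdec hVεlow hVεupp hVεdec
  exact sqrt_le_of_lyapunov (N := fun k => ‖ζ k‖ ^ 2 + ‖ε k‖ ^ 2)
    (W := fun k => c1 * V k + μ * Vε k) (S := fun k => c1 * σ ‖ω k‖ + (a4 + μ) * σε ‖ω k‖)
    hα₁ hρ hρ1.le (mul_one_sub_div_add_le hα₂.le hδ) (fun _ => by positivity)
    (fun k => min_mul_add_le_of_le hc1.le hμ.le (by positivity) (by positivity)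
      (hVlow k) (hVεlow k))
    (fun k => add_le_max_mul_of_le hc1.le hμ.le (by positivity) (by positivity)
      (hVupp k) (hVεupp k))
    (fun k => weighted_lyapunov_decrease hc1.le ha4.le hμ.le (by positivity) (by positivity)
      (min_le_left _ _) (min_le_right _ _) (hVdec k) (hVεlow (k + 1)) (hVεupp k) (hVεdec k))

/-- **Joint Lyapunov / small-gain theorem (Theorem 3, trajectory form).** -/
theorem joint_lyapunov_small_gain
    {p q m : ℕ} (a1 a2 a3 a4 c1 c2 c3 c4 : ℝ)
    (ha1 : 0 < a1) (ha2 : 0 < a2) (ha3 : 0 < a3) (ha4 : 0 < a4)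
    (hc1 : 0 < c1) (hc2 : 0 < c2) (hc3 : 0 < c3) (hc4 : 0 < c4)
    (hc32 : c3 < c2)
    (hsg1 : a4 * c4 / (a3 * c1) < 1)
    (hsg2 : a4 * c4 / (a3 * c3) < c1 / (c1 + c2))
    (σ σε : ℝ → ℝ) (hσ : IsClassK σ) (hσε : IsClassK σε) :
    ∃ (cζ lamζ : ℝ) (σζ : ℝ → ℝ), 0 < cζ ∧ lamζ ∈ Set.Ioo (0 : ℝ) 1 ∧ IsClassK σζ ∧
      ∀ (ζ : ℕ → Vec p) (ε : ℕ → Vec q) (ω : ℕ → Vec m) (V Vε : ℕ → ℝ),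
        (∀ k, 0 ≤ V k) → (∀ k, 0 ≤ Vε k) →
        (∀ k, a1 * ‖ζ k‖ ^ 2 ≤ V k) → (∀ k, V k ≤ a2 * ‖ζ k‖ ^ 2) →
        (∀ k, V (k + 1) ≤ V k - a3 * ‖ζ k‖ ^ 2 +
          a4 * (‖ε k‖ ^ 2 + ‖ε (k + 1)‖ ^ 2) + σ ‖ω k‖) →
        (∀ k, c1 * ‖ε k‖ ^ 2 ≤ Vε k) → (∀ k, Vε k ≤ c2 * ‖ε k‖ ^ 2) →
        (∀ k, Vε (k + 1) ≤ Vε k - c3 * ‖ε k‖ ^ 2 + c4 * ‖ζ k‖ ^ 2 + σε ‖ω k‖) →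
        ∀ k : ℕ, Real.sqrt (‖ζ k‖ ^ 2 + ‖ε k‖ ^ 2) ≤
          cζ * lamζ ^ k * Real.sqrt (‖ζ 0‖ ^ 2 + ‖ε 0‖ ^ 2) +
          ∑ i ∈ Finset.range (k + 1), lamζ ^ i * σζ ‖ω (k - i)‖ :=
  joint_lyapunov_small_gain_general a1 a2 a3 a4 c1 c2 c3 c4 ha1 ha2 ha3 ha4 hc1 hc2 hc3 hc4 hc32
    hsg2 σ σε hσ hσε
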